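/- Branches of execution models induce well-founded inductions of instances: Let C be a CP-theory, ⟨T, I, E⟩ an execution model of C, s a node of T at depth n with root-to-s path s₀,…,sₙ = s, and σ a C-selection extending σ(s). Then the sequence (K_j)_{j=0}^{2n+1} is a well-founded induction of the instance C^σ. -/

import Mathlib

/-!
Odd steps `K (2i+1) → K (2i+2)` apply the law `E(sᵢ)`, whose body is true in the potential
`ν_{sᵢ}`: not false because `I(sᵢ)` satisfies it, not unknown by the execution-model
condition. Even steps `K (2i) → ν_{sᵢ}` make an unfounded set false. Potentials only gain
precision along the branch and make exactly `I(sᵢ)` true, so `K (2i)` differs from `ν_{sᵢ}`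
only by atoms that `ν_{sᵢ}` makes false. A rule of `C^σ` whose head is false in `ν_{sᵢ}` cannot
come from a law fired above `sᵢ` (its selected head would lie in `I(sᵢ)`), so terminality of
the derivation at `sᵢ` makes its body false.
-/

noncomputable section
open scoped Classical

namespace CP

/-- The three truth values. -/
inductive TV where
  | f | u | t
deriving DecidableEq

namespace TV

/-- Rank of a truth value in the truth order `f ≤_t u ≤_t t`. -/
def rank : TV → ℕ
  | f => 0
  | u => 1
  | t => 2

/-- Minimum in the truth order. -/
def tmin (a b : TV) : TV := if rank a ≤ rank b then a else b

/-- Maximum in the truth order. -/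
def tmax (a b : TV) : TV := if rank a ≤ rank b then b else a

/-- Kleene negation. -/
def tneg : TV → TV
  | f => t
  | u => u
  | t => f

/-- The precision order on truth values: `u ≤_p f` and `u ≤_p t` (and reflexivity). -/
def lep (a b : TV) : Prop := a = u ∨ a = b

end TV

/-- Pointwise precision order on three-valued interpretations. -/
def leP {A : Type} (ν ν' : A → TV) : Prop := ∀ a, TV.lep (ν a) (ν' a)

/-- Propositional formulas over a type `A` of atoms. -/
inductive Form (A : Type) where
  | atom : A → Form A
  | conj : Form A → Form A → Form A
  | disj : Form A → Form A → Form A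
  | neg  : Form A → Form A

namespace Form

variable {A : Type}

/-- Two-valued satisfaction of a formula in an interpretation (a set of atoms). -/
def sat (I : Set A) : Form A → Prop
  | .atom a => a ∈ I
  | .conj φ ψ => sat I φ ∧ sat I ψ
  | .disj φ ψ => sat I φ ∨ sat I ψ
  | .neg φ => ¬ sat I φ

/-- Kleene three-valued valuation of a formula. -/
def val (ν : A → TV) : Form A → TV
  | .atom a => ν a
  | .conj φ ψ => TV.tmin (val ν φ) (val ν ψ)
  | .disj φ ψ => TV.tmax (val ν φ) (val ν ψ)
  | .neg φ => TV.tneg (val ν φ)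

/-- A formula is positive if it contains no negation. -/
def Positive : Form A → Prop
  | .atom _ => True
  | .conj φ ψ => Positive φ ∧ Positive ψ
  | .disj φ ψ => Positive φ ∧ Positive ψ
  | .neg _ => False

/-- The set of atoms occurring in a formula. -/
def atoms : Form A → Set A
  | .atom a => {a}
  | .conj φ ψ => atoms φ ∪ atoms ψ
  | .disj φ ψ => atoms φ ∪ atoms ψ
  | .neg φ => atoms φ

/-- Atoms occurring under a number of negations of parity `b` (`true` = odd). -/
def atomsPar : Bool → Form A → Set A
  | b, .atom a => if b then ∅ else {a}
  | b, .conj φ ψ => atomsPar b φ ∪ atomsPar b ψ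
  | b, .disj φ ψ => atomsPar b φ ∪ atomsPar b ψ
  | b, .neg φ => atomsPar (!b) φ

/-- Atoms occurring within the scope of an odd number of negations. -/
def natoms (φ : Form A) : Set A := atomsPar true φ

end Form

/-- A CP-law: a nonempty head list of distinct atoms with probabilities in `(0,1]`
summing to at most `1`, together with a body formula. -/
structure CPLaw (A : Type) where
  head : List (A × ℝ)
  body : Form A
  head_ne : head ≠ []
  head_nodup : (head.map Prod.fst).Nodup
  head_pos : ∀ p ∈ head, 0 < p.2 ∧ p.2 ≤ 1
  head_sum : (head.map Prod.snd).sum ≤ 1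

namespace CPLaw

variable {A : Type}

/-- `head_At(r)`: the set of atoms occurring in the head of `r`. -/
def headAt (r : CPLaw A) : Set A := {a | a ∈ r.head.map Prod.fst}

/-- The sum `Σᵢ αᵢ` of the probabilities in the head of `r`. -/
def psum (r : CPLaw A) : ℝ := (r.head.map Prod.snd).sum

end CPLaw

/-- A probabilistic process: a finite rooted tree (given by a parent function with a
depth function ensuring well-foundedness), with an interpretation, an edge probability
and a path probability attached to each node, together with (for use in execution
models) a CP-law index `rule` attached to each node and, for each non-root node, the
`choice` in the head of the rule fired at its parent that it corresponds to
(`none` is the extra child carrying the leftover probability `1 - Σᵢ αᵢ`). -/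
structure Proc (A R : Type) where
  Node : Type
  [fintypeNode : Fintype Node]
  root : Node
  parent : Node → Node
  depth : Node → ℕ
  interp : Node → Set A
  prob : Node → ℝ
  pathProb : Node → ℝ
  rule : Node → R
  choice : Node → Option ℕ
  depth_root : depth root = 0
  depth_parent : ∀ s, s ≠ root → depth s = depth (parent s) + 1
  pathProb_root : pathProb root = 1
  pathProb_parent : ∀ s, s ≠ root → pathProb s = pathProb (parent s) * prob s

attribute [instance] Proc.fintypeNode

namespace Proc

variable {A R : Type} (W : Proc A R)

/-- `s'` is a child of `s`. -/
def isChild (s' s : W.Node) : Prop := s' ≠ W.root ∧ W.parent s' = s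

/-- `s` is a leaf. -/
def isLeaf (s : W.Node) : Prop := ∀ s', ¬ W.isChild s' s

/-- `strictAnc a b`: `a` is a strict ancestor of `b`. -/
def strictAnc (a b : W.Node) : Prop :=
  Relation.TransGen (fun y x => W.isChild y x) b a

end Proc

variable {A R : Type}

/-- `R_E(s)`: the CP-laws that have not fired at any strict ancestor of `s`. -/
def RE (W : Proc A R) (s : W.Node) : Set R :=
  {r | ∀ s', W.strictAnc s' s → W.rule s' ≠ r}

/-- The CP-law `E(s)` fires at the non-leaf node `s`: `s` has exactly one child for
each head element `(Aᵢ, αᵢ)` (with interpretation `I(s) ∪ {Aᵢ}` and edge probability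
`αᵢ`), plus exactly one extra child with unchanged interpretation and edge probability
`1 - Σᵢ αᵢ` in case `Σᵢ αᵢ < 1`. -/
def FiresAt (C : R → CPLaw A) (W : Proc A R) (s : W.Node) : Prop :=
  (∀ s', W.isChild s' s →
     (∀ i, W.choice s' = some i →
        ∃ h : i < (C (W.rule s)).head.length,
          W.interp s' = insert ((C (W.rule s)).head.get ⟨i, h⟩).1 (W.interp s) ∧
          W.prob s' = ((C (W.rule s)).head.get ⟨i, h⟩).2) ∧
     (W.choice s' = none →
        (C (W.rule s)).psum < 1 ∧ W.interp s' = W.interp s ∧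
          W.prob s' = 1 - (C (W.rule s)).psum)) ∧
  (∀ s₁ s₂, W.isChild s₁ s → W.isChild s₂ s → W.choice s₁ = W.choice s₂ → s₁ = s₂) ∧
  (∀ i, i < (C (W.rule s)).head.length → ∃ s', W.isChild s' s ∧ W.choice s' = some i) ∧
  ((C (W.rule s)).psum < 1 → ∃ s', W.isChild s' s ∧ W.choice s' = none)

/-- `⟨W, I, E⟩` is a weak execution model of the CP-theory `C`. -/
def IsWEM (C : R → CPLaw A) (W : Proc A R) : Prop :=
  W.interp W.root = (∅ : Set A) ∧
  (∀ s, s ≠ W.root → 0 ≤ W.prob s ∧ W.prob s ≤ 1) ∧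
  (∀ s, ¬ W.isLeaf s →
    (∑ s' ∈ Finset.univ.filter (fun s' => W.isChild s' s), W.prob s') = 1) ∧
  (∀ s, ¬ W.isLeaf s →
    W.rule s ∈ RE W s ∧ Form.sat (W.interp s) (C (W.rule s)).body ∧ FiresAt C W s) ∧
  (∀ l, W.isLeaf l → ∀ r ∈ RE W l, ¬ Form.sat (W.interp l) (C r).body)

/-- `ν 0, …, ν n` is a hypothetical derivation sequence at node `s`. -/
def IsHDS (C : R → CPLaw A) (W : Proc A R) (s : W.Node)
    (ν : ℕ → A → TV) (n : ℕ) : Prop :=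
  (∀ a, ν 0 a = if a ∈ W.interp s then TV.t else TV.f) ∧
  ∀ i, i < n → ∃ r ∈ RE W s,
    Form.val (ν i) (C r).body ≠ TV.f ∧
    (∀ p ∈ (C r).headAt, ν i p = TV.f → ν (i+1) p = TV.u) ∧
    (∀ p, ¬ (p ∈ (C r).headAt ∧ ν i p = TV.f) → ν (i+1) p = ν i p)

/-- The hypothetical derivation sequence `ν 0, …, ν n` at `s` is terminal. -/
def HDSTerminal (C : R → CPLaw A) (W : Proc A R) (s : W.Node)
    (ν : ℕ → A → TV) (n : ℕ) : Prop :=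
  ¬ ∃ r ∈ RE W s, Form.val (ν n) (C r).body ≠ TV.f ∧
      ∃ p ∈ (C r).headAt, ν n p = TV.f

/-- `⟨W, I, E⟩` is an execution model of `C`: a weak execution model in which, at every
non-leaf node, the body of the fired CP-law is not unknown in the potential of the
node (the common limit of all terminal hypothetical derivation sequences). -/
def IsExec (C : R → CPLaw A) (W : Proc A R) : Prop :=
  IsWEM C W ∧
  ∀ s, ¬ W.isLeaf s → ∀ ν n, IsHDS C W s ν n → HDSTerminal C W s ν n →
    Form.val (ν n) (C (W.rule s)).body ≠ TV.u

/-- `π_T`: the probability distribution on interpretations induced by a process. -/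
def piT (W : Proc A R) (J : Set A) : ℝ :=
  ∑ l ∈ Finset.univ.filter (fun l => W.isLeaf l ∧ W.interp l = J), W.pathProb l

/-- A `C`-selection: for each CP-law occurrence, either a head element (`some i`)
or the distinguished `∅` outcome (`none`), which carries probability `1 - Σᵢ αᵢ`. -/
abbrev Sel (C : R → CPLaw A) : Type := (r : R) → Option (Fin (C r).head.length)

/-- The probability `σ^α(r)` of the outcome selected for `r` by `σ`. -/
def selWeight (C : R → CPLaw A) (σ : Sel C) (r : R) : ℝ :=
  match σ r with
  | some i => ((C r).head.get i).2
  | none => 1 - (C r).psum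

/-- The probability `P(σ) = Π_{r ∈ C} σ^α(r)` of a `C`-selection. -/
def selProb [Fintype R] (C : R → CPLaw A) (σ : Sel C) : ℝ :=
  ∏ r, selWeight C σ r

/-- `σ` extends the partial selection `σ(s)` determined by the path from the root
to `s`: for every strict ancestor `s'` of `s`, `σ` assigns to the rule fired at `s'`
the head element corresponding to the child of `s'` lying on the path to `s`. -/
def ExtendsPathSel (C : R → CPLaw A) (W : Proc A R) (σ : Sel C) (s : W.Node) : Prop :=
  ∀ s' s'', W.strictAnc s' s → W.isChild s'' s' → (s'' = s ∨ W.strictAnc s'' s) →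
    (σ (W.rule s')).map Fin.val = W.choice s''

/-- `ν` updated to map `p` to true. -/
def updT {A : Type} (ν : A → TV) (p : A) : A → TV :=
  fun a => if a = p then TV.t else ν a

/-- One step of a well-founded induction for the logic program `P` (a family of
rules, each a pair of a head atom and a body formula): either make the head of a
rule with true body true, or make an unfounded set false. -/
def WFStep {A Q : Type} (P : Q → A × Form A) (ν ν' : A → TV) : Prop :=
  (∃ q, Form.val ν (P q).2 = TV.t ∧ ν' = updT ν (P q).1) ∨
  (∃ U : Set A, (∀ p ∈ U, ν p = TV.u) ∧
    (∀ p, ν' p = if p ∈ U then TV.f else ν p) ∧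
    (∀ q, (P q).1 ∈ U → Form.val ν' (P q).2 = TV.f))

/-- `ν 0, …, ν m` is a well-founded induction of the logic program `P`. -/
def IsWFI {A Q : Type} (P : Q → A × Form A) (ν : ℕ → A → TV) (m : ℕ) : Prop :=
  (∀ a, ν 0 a = TV.u) ∧ ∀ j, j < m → WFStep P (ν j) (ν (j+1))

/-- The well-founded induction with limit `ν m` is terminal: no further step yields a
strictly more precise interpretation. -/
def WFITerminal {A Q : Type} (P : Q → A × Form A) (ν : ℕ → A → TV) (m : ℕ) : Prop :=
  ∀ ν', WFStep P (ν m) ν' → leP (ν m) ν' → ν' = ν m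

/-- The instance `C^σ`: the logic program consisting of the rules
`σ^h(r) ← body(r)` for all `r` with `σ^h(r) ≠ ∅`. -/
def instProg (C : R → CPLaw A) (σ : Sel C) :
    {r : R // (σ r).isSome} → A × Form A :=
  fun q => (((C q.1).head.get ((σ q.1).get q.2)).1, (C q.1).body)

/-- The logic program `P` has an exact well-founded model equal to `J`: some terminal
well-founded induction of `P` has as its limit the total interpretation corresponding
to `J`. -/
def LimitIs {A Q : Type} (P : Q → A × Form A) (J : Set A) : Prop :=
  ∃ ν m, IsWFI P ν m ∧ WFITerminal P ν m ∧
    ∀ a, ν m a = if a ∈ J then TV.t else TV.f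

/-- The instance based semantics `μ_C`. -/
def muC [Fintype R] (C : R → CPLaw A) (J : Set A) : ℝ :=
  ∑ σ ∈ Finset.univ.filter (fun σ : Sel C => LimitIs (instProg C σ) J),
    selProb C σ

namespace TV

theorem lep_tmin {a b c d : TV} (hab : lep a b) (hcd : lep c d) : lep (tmin a c) (tmin b d) := by
  cases a <;> cases b <;> cases c <;> cases d <;> simp_all [lep, tmin, rank]

theorem lep_tmax {a b c d : TV} (hab : lep a b) (hcd : lep c d) : lep (tmax a c) (tmax b d) := by
  cases a <;> cases b <;> cases c <;> cases d <;> simp_all [lep, tmax, rank]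

theorem lep_tneg {a b : TV} (hab : lep a b) : lep (tneg a) (tneg b) := by
  cases a <;> cases b <;> simp_all [lep, tneg]

theorem lep_t_iff {a : TV} : lep a t ↔ a ≠ f := by
  cases a <;> simp [lep]

theorem lep_f_iff {a : TV} : lep a f ↔ a ≠ t := by
  cases a <;> simp [lep]

theorem lep.ne_f {a b : TV} (h : lep a b) (hb : b ≠ f) : a ≠ f := by
  rcases h with rfl | rfl
  · simp
  · exact hb

end TV

theorem Form.val_mono {ν ν' : A → TV} (h : leP ν ν') (φ : Form A) :
    TV.lep (φ.val ν) (φ.val ν') := by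
  induction φ with
  | atom a => exact h a
  | conj _ _ ih₁ ih₂ => exact TV.lep_tmin ih₁ ih₂
  | disj _ _ ih₁ ih₂ => exact TV.lep_tmax ih₁ ih₂
  | neg _ ih => exact TV.lep_tneg ih

theorem Form.val_ite_mem (I : Set A) (φ : Form A) :
    φ.val (fun a => if a ∈ I then TV.t else TV.f) = if φ.sat I then TV.t else TV.f := by
  induction φ with
  | atom a => rfl
  | conj φ ψ ihφ ihψ =>
    simp only [Form.val, Form.sat, ihφ, ihψ]
    split_ifs <;> simp_all [TV.tmin, TV.rank]
  | disj φ ψ ihφ ihψ =>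
    simp only [Form.val, Form.sat, ihφ, ihψ]
    split_ifs <;> simp_all [TV.tmax, TV.rank]
  | neg φ ih =>
    simp only [Form.val, Form.sat, ih]
    split_ifs <;> simp_all [TV.tneg]

/-- `ν[σ^h(r) : t]`, which is `ν` itself when `σ^h(r) = ∅`. -/
def updSelected (C : R → CPLaw A) (σ : Sel C) (r : R) (ν : A → TV) : A → TV :=
  match σ r with
  | some j => updT ν ((C r).head.get j).1
  | none => ν

def ExtendsByFalse (κ ν : A → TV) : Prop :=
  leP κ ν ∧ ∀ a, ν a = TV.t → κ a = TV.t

theorem wfStep_updSelected {C : R → CPLaw A} {σ : Sel C} {r : R} {ν : A → TV}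
    (h : (C r).body.val ν = TV.t) : WFStep (instProg C σ) ν (updSelected C σ r ν) := by
  unfold updSelected
  split
  · next j hj => exact Or.inl ⟨⟨r, by simp [hj]⟩, h, by simp [instProg, hj]⟩
  · exact Or.inr ⟨∅, by simp, by simp, by simp⟩

theorem wfStep_of_extendsByFalse {Q : Type} {P : Q → A × Form A} {κ ν : A → TV}
    (hκν : ExtendsByFalse κ ν) (hunf : ∀ q, ν (P q).1 = TV.f → (P q).2.val ν = TV.f) :
    WFStep P κ ν := by
  refine Or.inr ⟨{a | κ a = TV.u ∧ ν a = TV.f}, fun a ha => ha.1, fun a => ?_,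
    fun q hq => hunf q hq.2⟩
  split_ifs with ha
  · exact ha.2
  · rcases hκν.1 a with hu | heq
    · have := hκν.2 a
      cases hv : ν a <;> simp_all
    · exact heq.symm

namespace IsHDS

variable {C : R → CPLaw A} {W : Proc A R} {s : W.Node} {ν : ℕ → A → TV} {m : ℕ}

/-- Derivation steps only turn false atoms into unknown ones. -/
theorem eq_t_iff (h : IsHDS C W s ν m) {i : ℕ} (hi : i ≤ m) (a : A) :
    ν i a = TV.t ↔ a ∈ W.interp s := by
  induction i with
  | zero => rw [h.1 a]; split_ifs with ha <;> simp [ha]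
  | succ i ih =>
    obtain ⟨r, -, -, hfu, hkeep⟩ := h.2 i (by omega)
    by_cases hc : a ∈ (C r).headAt ∧ ν i a = TV.f
    · rw [hfu a hc.1 hc.2, ← ih (by omega), hc.2]
      simp
    · rw [hkeep a hc]
      exact ih (by omega)

theorem leP_zero (h : IsHDS C W s ν m) {i : ℕ} (hi : i ≤ m) : leP (ν i) (ν 0) := by
  intro a
  rw [h.1 a]
  split_ifs with ha
  · exact Or.inr ((h.eq_t_iff hi a).2 ha)
  · exact TV.lep_f_iff.2 fun ht => ha ((h.eq_t_iff hi a).1 ht)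

theorem val_ne_f_of_sat (h : IsHDS C W s ν m) {φ : Form A} (hφ : φ.sat (W.interp s)) :
    φ.val (ν m) ≠ TV.f := by
  have hmono := Form.val_mono (h.leP_zero le_rfl) φ
  rw [show ν 0 = _ from funext h.1, Form.val_ite_mem, if_pos hφ] at hmono
  exact TV.lep_t_iff.1 hmono

theorem leP_of_closed (h : IsHDS C W s ν m) {μ : A → TV}
    (hclosed : ∀ r ∈ RE W s, (C r).body.val μ ≠ TV.f → ∀ p ∈ (C r).headAt, μ p ≠ TV.f)
    (h0 : leP μ (ν 0)) {j : ℕ} (hj : j ≤ m) : leP μ (ν j) := by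
  induction j with
  | zero => exact h0
  | succ j ih =>
    have ih := ih (by omega)
    obtain ⟨r, hr, hbody, hfu, hkeep⟩ := h.2 j (by omega)
    have hμbody : (C r).body.val μ ≠ TV.f := (Form.val_mono ih _).ne_f hbody
    intro a
    by_cases hc : a ∈ (C r).headAt ∧ ν j a = TV.f
    · rw [hfu a hc.1 hc.2]
      rcases ih a with hu | heq
      · exact Or.inl hu
      · exact absurd (heq.trans hc.2) (hclosed r hr hμbody a hc.1)
    · rw [hkeep a hc]
      exact ih a

end IsHDS

theorem Proc.not_isLeaf_of_isChild {W : Proc A R} {c p : W.Node} (hc : W.isChild c p) :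
    ¬ W.isLeaf p :=
  fun hleaf => hleaf c hc

theorem not_strictAnc_root (W : Proc A R) (s : W.Node) : ¬ W.strictAnc s W.root := by
  intro h
  obtain ⟨b, hb, -⟩ := Relation.TransGen.head'_iff.mp h
  exact hb.1 rfl

theorem mem_RE_child_iff {W : Proc A R} {c p : W.Node} (hc : W.isChild c p) {r : R} :
    r ∈ RE W c ↔ r ∈ RE W p ∧ W.rule p ≠ r := by
  constructor
  · intro hr
    exact ⟨fun s' hs' => hr s' (.head hc hs'), hr p (.single hc)⟩
  · rintro ⟨hr, hp⟩ s' hs'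
    obtain ⟨b, hb, hrest⟩ := Relation.TransGen.head'_iff.mp hs'
    obtain rfl : b = p := hb.2.symm.trans hc.2
    rcases Relation.reflTransGen_iff_eq_or_transGen.mp hrest with rfl | h
    · exact hp
    · exact hr s' h

namespace IsWEM

variable {C : R → CPLaw A} {W : Proc A R} {c p : W.Node}

theorem fires (hW : IsWEM C W) (hp : ¬ W.isLeaf p) :
    W.rule p ∈ RE W p ∧ (C (W.rule p)).body.sat (W.interp p) ∧ FiresAt C W p :=
  hW.2.2.2.1 p hp

theorem interp_child_of_choice_some (hW : IsWEM C W) (hc : W.isChild c p)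
    {j : Fin (C (W.rule p)).head.length} (hj : W.choice c = some j) :
    W.interp c = insert ((C (W.rule p)).head.get j).1 (W.interp p) :=
  (((hW.fires (Proc.not_isLeaf_of_isChild hc)).2.2.1 c hc).1 j hj).2.1

theorem interp_child_of_choice_none (hW : IsWEM C W) (hc : W.isChild c p)
    (hj : W.choice c = none) : W.interp c = W.interp p :=
  (((hW.fires (Proc.not_isLeaf_of_isChild hc)).2.2.1 c hc).2 hj).2.1

theorem interp_child_eq_or (hW : IsWEM C W) (hc : W.isChild c p) :
    W.interp c = W.interp p ∨
      ∃ j, W.interp c = insert ((C (W.rule p)).head.get j).1 (W.interp p) := by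
  cases hj : W.choice c with
  | none => exact Or.inl (hW.interp_child_of_choice_none hc hj)
  | some i =>
    obtain ⟨hi, hI, -⟩ :=
      ((hW.fires (Proc.not_isLeaf_of_isChild hc)).2.2.1 c hc).1 i hj
    exact Or.inr ⟨⟨i, hi⟩, hI⟩

theorem interp_subset_child (hW : IsWEM C W) (hc : W.isChild c p) :
    W.interp p ⊆ W.interp c := by
  rcases hW.interp_child_eq_or hc with hI | ⟨j, hI⟩ <;> rw [hI]
  exact Set.subset_insert _ _

theorem interp_child_subset (hW : IsWEM C W) (hc : W.isChild c p) :
    W.interp c ⊆ W.interp p ∪ (C (W.rule p)).headAt := by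
  rcases hW.interp_child_eq_or hc with hI | ⟨j, hI⟩ <;> rw [hI]
  · exact Set.subset_union_left
  · exact Set.insert_subset (Or.inr (List.mem_map_of_mem (List.get_mem _ _)))
      Set.subset_union_left

theorem extendsByFalse_root (hW : IsWEM C W) {ν : ℕ → A → TV} {m : ℕ}
    (hν : IsHDS C W W.root ν m) : ExtendsByFalse (fun _ => TV.u) (ν m) := by
  refine ⟨fun _ => Or.inl rfl, fun a ha => ?_⟩
  have := (hν.eq_t_iff le_rfl a).1 ha
  rw [hW.1] at this
  exact absurd this (Set.notMem_empty a)

theorem selected_head_mem_child (hW : IsWEM C W) (hc : W.isChild c p) {σ : Sel C}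
    (hσ : (σ (W.rule p)).map Fin.val = W.choice c)
    (hp : ∀ r ∉ RE W p, ∀ j, σ r = some j → ((C r).head.get j).1 ∈ W.interp p) :
    ∀ r ∉ RE W c, ∀ j, σ r = some j → ((C r).head.get j).1 ∈ W.interp c := by
  intro r hr j hj
  rw [mem_RE_child_iff hc, not_and_or, not_not] at hr
  rcases hr with hr | rfl
  · exact hW.interp_subset_child hc (hp r hr j hj)
  · rw [hW.interp_child_of_choice_some hc (by rw [← hσ, hj]; rfl)]
    exact Set.mem_insert _ _

theorem selected_head_mem_interp_path (hW : IsWEM C W) {n : ℕ} {path : Fin (n+1) → W.Node}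
    (hpath0 : path 0 = W.root)
    (hpathstep : ∀ i : Fin n, W.isChild (path i.succ) (path i.castSucc)) {σ : Sel C}
    (hσ : ∀ i : Fin n, (σ (W.rule (path i.castSucc))).map Fin.val = W.choice (path i.succ))
    (i : Fin (n+1)) :
    ∀ r ∉ RE W (path i), ∀ j, σ r = some j → ((C r).head.get j).1 ∈ W.interp (path i) := by
  induction i using Fin.induction with
  | zero => simp [hpath0, RE, not_strictAnc_root]
  | succ i ih => exact hW.selected_head_mem_child (hpathstep i) (hσ i) ih

end IsWEM

theorem HDSTerminal.wfStep_instProg {C : R → CPLaw A} {W : Proc A R} {s : W.Node}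
    {ν : ℕ → A → TV} {m : ℕ} {σ : Sel C} {κ : A → TV} (ht : HDSTerminal C W s ν m)
    (hν : IsHDS C W s ν m)
    (hfired : ∀ r ∉ RE W s, ∀ j, σ r = some j → ((C r).head.get j).1 ∈ W.interp s)
    (hκ : ExtendsByFalse κ (ν m)) : WFStep (instProg C σ) κ (ν m) := by
  refine wfStep_of_extendsByFalse hκ fun ⟨r, hr⟩ hq => ?_
  by_cases hrs : r ∈ RE W s
  · by_contra hb
    exact ht ⟨r, hrs, hb, _, List.mem_map_of_mem (List.get_mem _ _), hq⟩
  · have := (hν.eq_t_iff le_rfl _).2 (hfired r hrs _ (Option.some_get hr).symm)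
    simp_all [instProg]

namespace IsExec

variable {C : R → CPLaw A} {W : Proc A R} {c p : W.Node} {μ ν : ℕ → A → TV} {m k : ℕ}

/-- Not false by satisfaction in `I(p)`, not unknown by the execution-model condition. -/
theorem body_val_eq_t (h : IsExec C W) (hp : ¬ W.isLeaf p) (hμ : IsHDS C W p μ m)
    (hμt : HDSTerminal C W p μ m) : (C (W.rule p)).body.val (μ m) = TV.t := by
  have hf := hμ.val_ne_f_of_sat (h.1.fires hp).2.1
  have hu := h.2 p hp μ m hμ hμt
  cases hv : (C (W.rule p)).body.val (μ m) <;> simp_all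

theorem leP_potential_child (h : IsExec C W) (hc : W.isChild c p) (hμ : IsHDS C W p μ m)
    (hμt : HDSTerminal C W p μ m) (hν : IsHDS C W c ν k) : leP (μ m) (ν k) := by
  have hclosed : ∀ r ∈ RE W p, (C r).body.val (μ m) ≠ TV.f →
      ∀ a ∈ (C r).headAt, μ m a ≠ TV.f :=
    fun r hr hb a ha hf => hμt ⟨r, hr, hb, a, ha, hf⟩
  refine hν.leP_of_closed (fun r hr => hclosed r ((mem_RE_child_iff hc).1 hr).1) ?_ le_rfl
  intro a
  rw [hν.1 a]
  split_ifs with ha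
  · refine TV.lep_t_iff.2 ?_
    rcases h.1.interp_child_subset hc ha with hap | hah
    · rw [(hμ.eq_t_iff le_rfl a).2 hap]
      simp
    · have hp := Proc.not_isLeaf_of_isChild hc
      exact hclosed _ (h.1.fires hp).1 (by simp [h.body_val_eq_t hp hμ hμt]) a hah
  · exact TV.lep_f_iff.2 fun ht => ha (h.1.interp_subset_child hc ((hμ.eq_t_iff le_rfl a).1 ht))

theorem extendsByFalse_updSelected (h : IsExec C W) (hc : W.isChild c p) {σ : Sel C}
    (hσ : (σ (W.rule p)).map Fin.val = W.choice c) (hμ : IsHDS C W p μ m)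
    (hμt : HDSTerminal C W p μ m) (hν : IsHDS C W c ν k) :
    ExtendsByFalse (updSelected C σ (W.rule p) (μ m)) (ν k) := by
  have hle := h.leP_potential_child hc hμ hμt hν
  unfold updSelected
  split
  · next j hj =>
    have hI := h.1.interp_child_of_choice_some hc (by rw [← hσ, hj]; rfl)
    refine ⟨fun a => ?_, fun a ha => ?_⟩
    · unfold updT
      split_ifs with hap
      · exact Or.inr ((hν.eq_t_iff le_rfl a).2 (hI ▸ hap ▸ Set.mem_insert _ _)).symm
      · exact hle a
    · rw [hν.eq_t_iff le_rfl, hI] at ha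
      unfold updT
      split_ifs with hap
      · rfl
      · exact (hμ.eq_t_iff le_rfl a).2 (ha.resolve_left hap)
  · next hj =>
    have hI := h.1.interp_child_of_choice_none hc (by rw [← hσ, hj]; rfl)
    exact ⟨hle, fun a ha => (hμ.eq_t_iff le_rfl a).2 (hI ▸ (hν.eq_t_iff le_rfl a).1 ha)⟩

end IsExec

theorem branch_induces_wfi {A R : Type}
    (C : R → CPLaw A) (W : Proc A R) (h : IsExec C W)
    (n : ℕ) (path : Fin (n+1) → W.Node)
    (hpath0 : path 0 = W.root)
    (hpathstep : ∀ i : Fin n, W.isChild (path i.succ) (path i.castSucc))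
    (σ : Sel C)
    (hσ : ∀ i : Fin n,
      (σ (W.rule (path i.castSucc))).map Fin.val = W.choice (path i.succ))
    (nu : Fin (n+1) → A → TV)
    (hnu : ∀ i : Fin (n+1), ∃ (seq : ℕ → A → TV) (m : ℕ),
      IsHDS C W (path i) seq m ∧ HDSTerminal C W (path i) seq m ∧ seq m = nu i)
    (K : ℕ → A → TV)
    (hK0 : ∀ a, K 0 a = TV.u)
    (hKodd : ∀ i : Fin (n+1), K (2 * (i : ℕ) + 1) = nu i)
    (hKeven : ∀ i : Fin n, K (2 * (i : ℕ) + 2) =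
      (match σ (W.rule (path i.castSucc)) with
       | some j =>
          updT (nu i.castSucc) (((C (W.rule (path i.castSucc))).head.get j).1)
       | none => nu i.castSucc)) :
    IsWFI (instProg C σ) K (2 * n + 1) := by
  have hKeven' : ∀ i : Fin n, K (2 * i + 2) =
      updSelected C σ (W.rule (path i.castSucc)) (nu i.castSucc) := by
    intro i
    rw [hKeven i, updSelected]
    cases σ (W.rule (path i.castSucc)) <;> rfl
  choose seq m hseq hterm hlim using hnu
  have hentry : ∀ i : Fin (n+1), ExtendsByFalse (K (2 * i)) (seq i (m i)) := by
    intro i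
    induction i using Fin.cases with
    | zero =>
      rw [show K (2 * ((0 : Fin (n+1)) : ℕ)) = fun _ => TV.u from funext hK0]
      exact h.1.extendsByFalse_root (hpath0 ▸ hseq 0)
    | succ i =>
      rw [Fin.val_succ, mul_add, mul_one, hKeven' i, ← hlim]
      exact h.extendsByFalse_updSelected (hpathstep i) (hσ i) (hseq _) (hterm _) (hseq _)
  refine ⟨hK0, fun j hj => ?_⟩
  obtain ⟨i, rfl | rfl⟩ := Nat.even_or_odd' j
  · obtain ⟨i, rfl⟩ : ∃ i' : Fin (n+1), (i' : ℕ) = i := ⟨⟨i, by omega⟩, rfl⟩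
    rw [hKodd i, ← hlim]
    exact (hterm i).wfStep_instProg (hseq i)
      (h.1.selected_head_mem_interp_path hpath0 hpathstep hσ i) (hentry i)
  · obtain ⟨i, rfl⟩ : ∃ i' : Fin n, (i' : ℕ) = i := ⟨⟨i, by omega⟩, rfl⟩
    have hodd := hKodd i.castSucc
    rw [Fin.val_castSucc] at hodd
    show WFStep _ (K (2 * i + 1)) (K (2 * i + 2))
    rw [hodd, hKeven' i, ← hlim]
    exact wfStep_updSelected
      (h.body_val_eq_t (Proc.not_isLeaf_of_isChild (hpathstep i)) (hseq _) (hterm _))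

end CP
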